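/- Let Sys be an SPA process tree, a an action, B a nonempty a-synchronised set of leaves of Sys, and S the a-closure of B. Let r be the root of the smallest subtree of Sys containing all leaves of S. Then S is exactly the set of all leaves of the subtree rooted at r. -/

import Mathlib

/-!
An SPA system is modelled as a finite binary process tree: leaves are
sequential processes, each internal node is a parallel composition operator
labelled with a synchronisation set of actions.  Nodes (subtrees) of the tree
are identified with their positions, encoded as lists of Booleans (directions
from the root); a node `p` contains a node `q` iff `p` is a prefix of `q`.
-/

namespace SPA

/-- Binary process trees over a set of actions `Act`. -/
inductive PTree (Act : Type) : Type
  | leaf : PTree Act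
  | node : Set Act → PTree Act → PTree Act → PTree Act

variable {Act : Type}

/-- The subtree of a tree at a given position (if the position is valid). -/
def subtreeAt : PTree Act → List Bool → Option (PTree Act)
  | t, [] => some t
  | .leaf, _ :: _ => none
  | .node _ l r, b :: p => subtreeAt (if b then r else l) p

/-- `p` is a (valid position of a) node of `Sys`. -/
def IsNode (Sys : PTree Act) (p : List Bool) : Prop :=
  (subtreeAt Sys p).isSome

/-- `p` is a leaf of `Sys`, i.e. a sequential process. -/
def IsLeaf (Sys : PTree Act) (p : List Bool) : Prop :=
  subtreeAt Sys p = some .leaf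

/-- The node at position `p` is an internal node of type `||_a`
(its synchronisation set contains `a`). -/
def SyncAt (Sys : PTree Act) (p : List Bool) (a : Act) : Prop :=
  ∃ A l r, subtreeAt Sys p = some (.node A l r) ∧ a ∈ A

/-- The node at position `p` is an internal node of type `||_{¬a}`
(its synchronisation set does not contain `a`). -/
def NSyncAt (Sys : PTree Act) (p : List Bool) (a : Act) : Prop :=
  ∃ A l r, subtreeAt Sys p = some (.node A l r) ∧ a ∉ A

/-- Two nodes are disjoint iff neither subtree contains the other. -/
def DisjointNodes (p q : List Bool) : Prop :=
  ¬ p <+: q ∧ ¬ q <+: p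

/-- The longest common prefix of two positions: the join (lowest common
ancestor) of the two nodes, i.e. the root of the smallest subtree
containing both. -/
def lcp : List Bool → List Bool → List Bool
  | a :: as, b :: bs => if a = b then a :: lcp as bs else []
  | _, _ => []

/-- `q` lies strictly between `r` and `x` on the path from `r` down to `x`
(exclusive of both endpoints). -/
def StrictlyBetween (r x q : List Bool) : Prop :=
  r <+: q ∧ q <+: x ∧ q ≠ r ∧ q ≠ x

/-- The set of leaves of the subtree rooted at `p`. -/
def LeavesUnder (Sys : PTree Act) (p : List Bool) : Set (List Bool) :=
  {q | p <+: q ∧ IsLeaf Sys q}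


/-- A set `B` of leaves is `a`-synchronised: the join of every pair of distinct
leaves of `B` is of type `||_a`. -/
def ASynchronised (Sys : PTree Act) (a : Act) (B : Set (List Bool)) : Prop :=
  ∀ P ∈ B, ∀ Q ∈ B, P ≠ Q → SyncAt Sys (lcp P Q) a

/-- The `a`-closure of a set `B` of leaves: the least set containing `B` and
closed under the rule: if `P` is in the set and `Q` is a leaf distinct from `P`
whose join with `P` is of type `||_a`, then `Q` is in the set.
(This models the Involved Set of a transition.) -/
inductive AClosure (Sys : PTree Act) (a : Act) (B : Set (List Bool)) : List Bool → Prop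
  | base {P : List Bool} : P ∈ B → AClosure Sys a B P
  | step {P Q : List Bool} : AClosure Sys a B P → IsLeaf Sys Q → Q ≠ P →
      SyncAt Sys (lcp P Q) a → AClosure Sys a B Q

/-- `r` is the root of the smallest subtree containing all positions of `S`:
`r` is a common ancestor of all of `S`, and every common ancestor of all of `S`
contains the node `r`. -/
def IsJoinOf (S : Set (List Bool)) (r : List Bool) : Prop :=
  (∀ P ∈ S, r <+: P) ∧ ∀ q, (∀ P ∈ S, q <+: P) → q <+: r

/-!
If `r` is a leaf, the closure is `{r}`. Otherwise every element of the closure lies strictly below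
`r`, and by minimality of `r` on both sides of it. The closure grows from `B` by steps whose join
is of type `||_a`, so it can only reach the side of `r` not containing a given base element by a
step whose join is `r` itself; hence `r` is of type `||_a`, and every leaf below `r` is one step
away from a closure element on the other side of `r`.
-/

theorem List.IsPrefix.exists_append_singleton_prefix {α : Type*} {r x : List α}
    (h : r <+: x) (hne : x ≠ r) : ∃ b, r ++ [b] <+: x := by
  obtain ⟨_ | ⟨b, u⟩, rfl⟩ := h
  · simp at hne
  · exact ⟨b, u, by simp⟩

theorem List.ne_of_append_singleton_prefix {α : Type*} {r x y : List α} {b c : α}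
    (hb : r ++ [b] <+: x) (hc : r ++ [c] <+: y) (hbc : b ≠ c) : x ≠ y := by
  rintro rfl
  obtain ⟨u, rfl⟩ := hb
  obtain ⟨v, hv⟩ := hc
  simp only [List.append_assoc, List.singleton_append, List.append_cancel_left_eq,
    List.cons.injEq] at hv
  exact hbc hv.1.symm

lemma subtreeAt_append (t : PTree Act) (p q : List Bool) :
    subtreeAt t (p ++ q) = (subtreeAt t p).bind (subtreeAt · q) := by
  induction p generalizing t with
  | nil => rfl
  | cons b p ih =>
    cases t with
    | leaf => rfl
    | node A l r => exact ih _

lemma IsLeaf.eq_of_prefix {Sys : PTree Act} {p q : List Bool} (hp : IsLeaf Sys p)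
    (hpq : p <+: q) (hq : IsLeaf Sys q) : q = p := by
  obtain ⟨_ | ⟨b, l⟩, rfl⟩ := hpq
  · simp
  · rw [IsLeaf, subtreeAt_append, hp] at hq
    cases hq

lemma lcp_append : ∀ r u v : List Bool, lcp (r ++ u) (r ++ v) = r ++ lcp u v
  | [], _, _ => rfl
  | b :: r, u, v => by simp [lcp, lcp_append r u v]

lemma lcp_eq_of_append_singleton_prefix {r x y : List Bool} {b c : Bool}
    (hb : r ++ [b] <+: x) (hc : r ++ [c] <+: y) (hbc : b ≠ c) : lcp x y = r := by
  obtain ⟨u, rfl⟩ := hb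
  obtain ⟨v, rfl⟩ := hc
  simp [lcp_append, lcp, hbc]

lemma IsJoinOf.exists_mem_append_singleton_prefix {S : Set (List Bool)} {r : List Bool}
    (hr : IsJoinOf S r) (hbelow : ∀ P ∈ S, ∃ d, r ++ [d] <+: P) (c : Bool) :
    ∃ P ∈ S, r ++ [!c] <+: P := by
  by_contra! h
  have hc : r ++ [c] <+: r := hr.2 _ fun P hP => by
    obtain ⟨d, hd⟩ := hbelow P hP
    by_cases hdc : d = c
    · exact hdc ▸ hd
    · exact absurd (Bool.eq_not.mpr hdc ▸ hd) (h P hP)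
  simpa using hc.length_le

section AClosure

variable {Sys : PTree Act} {a : Act} {B : Set (List Bool)}

lemma AClosure.isLeaf (hBleaf : ∀ P ∈ B, IsLeaf Sys P) {P : List Bool}
    (h : AClosure Sys a B P) : IsLeaf Sys P := by
  induction h with
  | base hP => exact hBleaf _ hP
  | step _ hQ => exact hQ

lemma AClosure.append_singleton_prefix_or_syncAt (hBsync : ASynchronised Sys a B)
    {r : List Bool} (hbelow : ∀ P, AClosure Sys a B P → ∃ d, r ++ [d] <+: P)
    {P₀ : List Bool} {c : Bool} (hP₀ : P₀ ∈ B) (hc : r ++ [c] <+: P₀)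
    {P : List Bool} (hP : AClosure Sys a B P) : r ++ [c] <+: P ∨ SyncAt Sys r a := by
  induction hP with
  | @base P hPB =>
    obtain ⟨d, hd⟩ := hbelow P (.base hPB)
    by_cases hdc : d = c
    · exact .inl (hdc ▸ hd)
    have hne : P₀ ≠ P := List.ne_of_append_singleton_prefix hc hd (Ne.symm hdc)
    exact .inr (lcp_eq_of_append_singleton_prefix hc hd (Ne.symm hdc) ▸ hBsync _ hP₀ _ hPB hne)
  | @step P Q hP hQ hQP hsync ih =>
    refine ih.elim (fun hPc => ?_) .inr
    obtain ⟨d, hd⟩ := hbelow Q (.step hP hQ hQP hsync)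
    by_cases hdc : d = c
    · exact .inl (hdc ▸ hd)
    · exact .inr (lcp_eq_of_append_singleton_prefix hPc hd (Ne.symm hdc) ▸ hsync)

end AClosure

/-- Let `B` be a nonempty `a`-synchronised set of leaves, `S` its
`a`-closure and `r` the root of the smallest subtree containing all leaves of
`S`.  Then `S` is exactly the set of all leaves of the subtree rooted at `r`. -/
theorem closure_eq_leaves_under_root (Sys : PTree Act) (a : Act) (B : Set (List Bool))
    (hBne : B.Nonempty) (hBleaf : ∀ P ∈ B, IsLeaf Sys P)
    (hBsync : ASynchronised Sys a B)
    (r : List Bool) (hr : IsJoinOf {P | AClosure Sys a B P} r) :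
    {P | AClosure Sys a B P} = LeavesUnder Sys r := by
  obtain ⟨P₀, hP₀⟩ := hBne
  ext Q
  refine ⟨fun hQ => ⟨hr.1 Q hQ, hQ.isLeaf hBleaf⟩, fun ⟨hrQ, hQ⟩ => ?_⟩
  change AClosure Sys a B Q
  by_cases hr_leaf : IsLeaf Sys r
  · have hP₀r := hr_leaf.eq_of_prefix (hr.1 P₀ (.base hP₀)) (hBleaf P₀ hP₀)
    rw [hr_leaf.eq_of_prefix hrQ hQ, ← hP₀r]
    exact .base hP₀
  have hbelow : ∀ P, AClosure Sys a B P → ∃ d, r ++ [d] <+: P := fun P hP =>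
    List.IsPrefix.exists_append_singleton_prefix (hr.1 P hP)
      fun h => hr_leaf (h ▸ hP.isLeaf hBleaf)
  obtain ⟨c, hc⟩ := hbelow P₀ (.base hP₀)
  obtain ⟨P₁, hP₁, hP₁c⟩ := hr.exists_mem_append_singleton_prefix hbelow c
  have hsync : SyncAt Sys r a :=
    (AClosure.append_singleton_prefix_or_syncAt hBsync hbelow hP₀ hc hP₁).resolve_left
      fun h => List.ne_of_append_singleton_prefix h hP₁c (by simp) rfl
  obtain ⟨d, hd⟩ :=
    List.IsPrefix.exists_append_singleton_prefix hrQ fun h => hr_leaf (h ▸ hQ)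
  obtain ⟨P, hP, hPd⟩ := hr.exists_mem_append_singleton_prefix hbelow d
  have hQP : Q ≠ P := List.ne_of_append_singleton_prefix hd hPd (by simp)
  exact .step hP hQ hQP (lcp_eq_of_append_singleton_prefix hPd hd (by simp) ▸ hsync)

end SPA
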